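/- arXiv:2409.14528 — 4 statements merged into one kernel-verified Lean document; each statement's English description precedes it below -/
import Mathlib

section
/- Let G be a digraph and let G' be a spanning subgraph of G that is not a multipath. Then G' is minimal by inclusion among spanning subgraphs of G that are not multipaths if and only if G' is the disjoint union of some isolated vertices with either (1) a linear sink or a linear source, or (2) a coherently oriented cycle (possibly a loop). -/
set_option autoImplicit false

noncomputable section

attribute [local instance] Classical.propDecidable

/-- A (finite) directed multigraph: finitely many vertices and edges, each edge
has a source and a target.  (Loops and, a priori, parallel edges are allowed;
the paper's convention of at most one edge between an ordered pair of distinct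
vertices is imposed via `DiGraph.EdgeUnique`.) -/
structure DiGraph where
  V : Type
  E : Type
  [fintV : Fintype V]
  [decV : DecidableEq V]
  [fintE : Fintype E]
  [decE : DecidableEq E]
  s : E → V
  t : E → V

attribute [instance] DiGraph.fintV DiGraph.decV DiGraph.fintE DiGraph.decE

namespace DiGraph

/-- For each ordered pair of *distinct* vertices there is at most one edge. -/
def EdgeUnique (G : DiGraph) : Prop :=
  ∀ e f : G.E, G.s e = G.s f → G.t e = G.t f → G.s e ≠ G.t e → e = f

/-- G has no loops. -/
def Loopless (G : DiGraph) : Prop := ∀ e : G.E, G.s e ≠ G.t e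

/-- A coherently oriented cycle, given as the (cyclically ordered) list of its
edges: the list is nonempty, has no repeated edges, visits no vertex twice,
and the target of each edge is the source of the next one (cyclically).
A loop is a coherently oriented cycle of length 1. -/
def IsCohCycle (G : DiGraph) (c : List G.E) : Prop :=
  c ≠ [] ∧ c.Nodup ∧ (c.map G.s).Nodup ∧
    ∀ i : Fin c.length,
      G.t (c.get i) =
        G.s (c.get ⟨(i.val + 1) % c.length,
          Nat.mod_lt _ (Nat.lt_of_le_of_lt (Nat.zero_le _) i.isLt)⟩)

/-- `m` is (the edge set of) a multipath of `G`: the corresponding spanning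
subgraph has no loops, in-degree and out-degree at most one at each vertex, and
contains no coherently oriented cycle; equivalently, every connected component
is a single vertex or a simple (directed) path. -/
def IsMultipath (G : DiGraph) (m : Finset G.E) : Prop :=
  (∀ e ∈ m, G.s e ≠ G.t e) ∧
  (∀ e ∈ m, ∀ f ∈ m, G.s e = G.s f → e = f) ∧
  (∀ e ∈ m, ∀ f ∈ m, G.t e = G.t f → e = f) ∧
  ¬∃ c : List G.E, IsCohCycle G c ∧ ∀ g ∈ c, g ∈ m

/-- The forbidden pattern (A): vertices v0,v1,v2 and edges (v1,v0), (v0,v2), (v1,v2). -/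
def HasPatternA (G : DiGraph) : Prop :=
  ∃ v0 v1 v2 : G.V, v0 ≠ v1 ∧ v0 ≠ v2 ∧ v1 ≠ v2 ∧
    (∃ e : G.E, G.s e = v1 ∧ G.t e = v0) ∧
    (∃ e : G.E, G.s e = v0 ∧ G.t e = v2) ∧
    (∃ e : G.E, G.s e = v1 ∧ G.t e = v2)

/-- The reverse of pattern (A). -/
def HasPatternArev (G : DiGraph) : Prop :=
  ∃ v0 v1 v2 : G.V, v0 ≠ v1 ∧ v0 ≠ v2 ∧ v1 ≠ v2 ∧
    (∃ e : G.E, G.s e = v0 ∧ G.t e = v1) ∧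
    (∃ e : G.E, G.s e = v2 ∧ G.t e = v0) ∧
    (∃ e : G.E, G.s e = v2 ∧ G.t e = v1)

/-- The forbidden pattern (B): vertices v0,v1,v2,v3 and edges (v0,v1), (v2,v1), (v2,v3). -/
def HasPatternB (G : DiGraph) : Prop :=
  ∃ v0 v1 v2 v3 : G.V,
    v0 ≠ v1 ∧ v0 ≠ v2 ∧ v0 ≠ v3 ∧ v1 ≠ v2 ∧ v1 ≠ v3 ∧ v2 ≠ v3 ∧
    (∃ e : G.E, G.s e = v0 ∧ G.t e = v1) ∧
    (∃ e : G.E, G.s e = v2 ∧ G.t e = v1) ∧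
    (∃ e : G.E, G.s e = v2 ∧ G.t e = v3)

/-- The reverse of pattern (B). -/
def HasPatternBrev (G : DiGraph) : Prop :=
  ∃ v0 v1 v2 v3 : G.V,
    v0 ≠ v1 ∧ v0 ≠ v2 ∧ v0 ≠ v3 ∧ v1 ≠ v2 ∧ v1 ≠ v3 ∧ v2 ≠ v3 ∧
    (∃ e : G.E, G.s e = v1 ∧ G.t e = v0) ∧
    (∃ e : G.E, G.s e = v1 ∧ G.t e = v2) ∧
    (∃ e : G.E, G.s e = v3 ∧ G.t e = v2)

/-- (MP1): G contains no copy, up to reversing all orientations, of the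
patterns (A) and (B). -/
def MP1 (G : DiGraph) : Prop :=
  ¬HasPatternA G ∧ ¬HasPatternArev G ∧ ¬HasPatternB G ∧ ¬HasPatternBrev G

/-- (MP2): every coherently oriented cycle of length ≥ 2 (i.e. loops excluded)
is a connected component: any edge incident to a vertex of the cycle belongs
to the cycle. -/
def MP2 (G : DiGraph) : Prop :=
  ∀ c : List G.E, IsCohCycle G c → 2 ≤ c.length →
    ∀ f : G.E, (∃ g ∈ c, G.s g = G.s f ∨ G.s g = G.t f) → f ∈ c

def IsMPDigraph (G : DiGraph) : Prop := MP1 G ∧ MP2 G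

/-- The axioms (I1), (I2), (I3) for a family of independent sets of a matroid. -/
def IsIndepFamily {α : Type} [DecidableEq α] (I : Finset α → Prop) : Prop :=
  I ∅ ∧ (∀ A B : Finset α, I A → B ⊆ A → I B) ∧
    ∀ A B : Finset α, I A → I B → B.card < A.card →
      ∃ x ∈ A, x ∉ B ∧ I (insert x B)

/-- `m` is the edge set of a linear sink (two non-loop edges with a common
target and distinct sources). -/
def IsLinearSinkSet (G : DiGraph) (m : Finset G.E) : Prop :=
  ∃ e1 e2 : G.E, e1 ≠ e2 ∧ m = {e1, e2} ∧ G.t e1 = G.t e2 ∧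
    G.s e1 ≠ G.s e2 ∧ G.s e1 ≠ G.t e1 ∧ G.s e2 ≠ G.t e2

/-- `m` is the edge set of a linear source (two non-loop edges with a common
source and distinct targets). -/
def IsLinearSourceSet (G : DiGraph) (m : Finset G.E) : Prop :=
  ∃ e1 e2 : G.E, e1 ≠ e2 ∧ m = {e1, e2} ∧ G.s e1 = G.s e2 ∧
    G.t e1 ≠ G.t e2 ∧ G.s e1 ≠ G.t e1 ∧ G.s e2 ≠ G.t e2

/-- `m` is the edge set of a coherently oriented cycle (possibly a loop). -/
def IsCohCycleSet (G : DiGraph) (m : Finset G.E) : Prop :=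
  ∃ c : List G.E, IsCohCycle G c ∧ m = c.toFinset

/-- Two vertices are adjacent if they are the endpoints of a common edge. -/
def adj (G : DiGraph) (v w : G.V) : Prop :=
  ∃ e : G.E, (G.s e = v ∧ G.t e = w) ∨ (G.s e = w ∧ G.t e = v)

/-- Two vertices lie in the same connected component. -/
def connRel (G : DiGraph) : G.V → G.V → Prop := Relation.EqvGen (adj G)

/-- G is connected. -/
def ConnectedD (G : DiGraph) : Prop := Nonempty G.V ∧ ∀ v w : G.V, connRel G v w

/-- The number of connected components of G (isolated vertices count). -/
def numComponents (G : DiGraph) : ℕ :=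
  Nat.card (Quotient (Relation.EqvGen.setoid (adj G)))

/-- `S` is the set of edges of one of the connected components of `G`. -/
def IsComponentEdges (G : DiGraph) (S : Finset G.E) : Prop :=
  ∃ v : G.V, S = Finset.univ.filter (fun e => connRel G v (G.s e))

/-- in-degree of `v` in the subgraph spanned by the edges of `R`. -/
def indegIn (G : DiGraph) (R : Finset G.E) (v : G.V) : ℕ :=
  (R.filter (fun e => G.t e = v)).card

/-- out-degree of `v` in the subgraph spanned by the edges of `R`. -/
def outdegIn (G : DiGraph) (R : Finset G.E) (v : G.V) : ℕ :=
  (R.filter (fun e => G.s e = v)).card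

def indeg (G : DiGraph) (v : G.V) : ℕ := indegIn G Finset.univ v
def outdeg (G : DiGraph) (v : G.V) : ℕ := outdegIn G Finset.univ v

/-- `v` is a vertex of the subgraph spanned by the edge set `R`. -/
def IncidentTo (G : DiGraph) (R : Finset G.E) (v : G.V) : Prop :=
  ∃ e ∈ R, G.s e = v ∨ G.t e = v

/-- `v` is stable in the subgraph spanned by `R`. -/
def StableIn (G : DiGraph) (R : Finset G.E) (v : G.V) : Prop :=
  indegIn G R v = 0 ∨ outdegIn G R v = 0

/-- `v` is unstable in `G`. -/
def UnstableG (G : DiGraph) (v : G.V) : Prop :=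
  0 < indeg G v ∧ 0 < outdeg G v

/-- adjacency within the subgraph spanned by `R`. -/
def adjIn (G : DiGraph) (R : Finset G.E) (a b : G.V) : Prop :=
  ∃ g ∈ R, (G.s g = a ∧ G.t g = b) ∨ (G.s g = b ∧ G.t g = a)

/-- The subgraph spanned by the edge set `R` is connected. -/
def EdgeConnected (G : DiGraph) (R : Finset G.E) : Prop :=
  ∀ e ∈ R, ∀ f ∈ R, Relation.EqvGen (adjIn G R) (G.s e) (G.s f)

/-- `R` spans a dynamical region of `G`: it is connected, has at least one
edge, every boundary vertex is unstable in `G` but stable in `R` and in its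
complement, and no edge of `R` lies on an oriented cycle of `G` not contained
in `R`. -/
def IsDynRegion (G : DiGraph) (R : Finset G.E) : Prop :=
  R.Nonempty ∧ EdgeConnected G R ∧
  (∀ v : G.V, IncidentTo G R v → IncidentTo G (Finset.univ \ R) v →
     UnstableG G v ∧ StableIn G R v ∧ StableIn G (Finset.univ \ R) v) ∧
  (∀ c : List G.E, IsCohCycle G c → (∃ g ∈ c, g ∈ R) → ∀ g ∈ c, g ∈ R)

/-- A dynamical module is a minimal dynamical region. -/
def IsDynModule (G : DiGraph) (R : Finset G.E) : Prop :=
  IsDynRegion G R ∧ ∀ R' ⊆ R, IsDynRegion G R' → R' = R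

/-- `G` is a sink on `n+1` vertices. -/
def IsSinkGraph (G : DiGraph) : Prop :=
  Loopless G ∧ Fintype.card G.V = Fintype.card G.E + 1 ∧
    ∃! v : G.V, ∀ e : G.E, G.t e = v

/-- `G` is a source on `n+1` vertices. -/
def IsSourceGraph (G : DiGraph) : Prop :=
  Loopless G ∧ Fintype.card G.V = Fintype.card G.E + 1 ∧
    ∃! v : G.V, ∀ e : G.E, G.s e = v

/-- `R` spans a sink: all its edges are non-loops with a common target and
pairwise distinct sources. -/
def IsSinkSet (G : DiGraph) (R : Finset G.E) : Prop :=
  ∃ v : G.V, (∀ e ∈ R, G.t e = v ∧ G.s e ≠ v) ∧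
    ∀ e ∈ R, ∀ f ∈ R, G.s e = G.s f → e = f

/-- `R` spans a source. -/
def IsSourceSet (G : DiGraph) (R : Finset G.E) : Prop :=
  ∃ v : G.V, (∀ e ∈ R, G.s e = v ∧ G.t e ≠ v) ∧
    ∀ e ∈ R, ∀ f ∈ R, G.t e = G.t f → e = f

/-- The whole digraph `G` is a coherently oriented cycle. -/
def IsCohCycleGraph (G : DiGraph) : Prop :=
  ∃ c : List G.E, IsCohCycle G c ∧ (∀ e : G.E, e ∈ c) ∧
    ∀ v : G.V, ∃ g ∈ c, G.s g = v

/-- Rank function of the multipath matroid: the size of a largest multipath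
contained in `A`. -/
def mrank (G : DiGraph) (A : Finset G.E) : ℕ :=
  (A.powerset.filter (fun m => IsMultipath G m)).sup Finset.card

/-- The Tutte polynomial of the multipath matroid of `G`, evaluated at `(x,y)`. -/
def tutte (G : DiGraph) (x y : ℤ) : ℤ :=
  ∑ A : Finset G.E,
    (x - 1) ^ (mrank G Finset.univ - mrank G A) *
      (y - 1) ^ (A.card - mrank G A)

/-- `e` is a loop of the multipath matroid. -/
def IsMatroidLoop (G : DiGraph) (e : G.E) : Prop := ¬IsMultipath G {e}

/-- `e` is a coloop of the multipath matroid: it belongs to every maximal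
independent set. -/
def IsColoop (G : DiGraph) (e : G.E) : Prop :=
  ∀ m : Finset G.E, IsMultipath G m →
    (∀ m' : Finset G.E, IsMultipath G m' → m ⊆ m' → m' = m) → e ∈ m

/-- The digraph obtained from `G` by deleting the edge `e`. -/
def deleteEdge (G : DiGraph) (e : G.E) : DiGraph where
  V := G.V
  E := {f : G.E // f ≠ e}
  s := fun f => G.s f.val
  t := fun f => G.t f.val

/-- The vertex set of the MP-contraction `G ⫽ e`: the vertices of `G` other
than the endpoints of `e`, together with a new vertex `x = Sum.inr ()`. -/
def CVert (G : DiGraph) (e : G.E) : Type :=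
  {u : G.V // u ≠ G.s e ∧ u ≠ G.t e} ⊕ Unit

instance (G : DiGraph) (e : G.E) : Fintype (CVert G e) := by
  unfold CVert; infer_instance

instance (G : DiGraph) (e : G.E) : DecidableEq (CVert G e) := by
  unfold CVert; infer_instance

/-- Source, in `G ⫽ e`, of the edge coming from the edge `f` of `G`
(for `e = (v,w)`, the new source is `x` iff `s f ∈ {v,w}` or `t f = w`). -/
def contrS (G : DiGraph) (e f : G.E) : CVert G e :=
  if h : G.s f = G.s e ∨ G.s f = G.t e ∨ G.t f = G.t e then Sum.inr ()
  else Sum.inl ⟨G.s f, by push_neg at h; exact ⟨h.1, h.2.1⟩⟩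

/-- Target, in `G ⫽ e`, of the edge coming from the edge `f` of `G`
(for `e = (v,w)`, the new target is `x` iff `t f ∈ {v,w}` or `s f = v`). -/
def contrT (G : DiGraph) (e f : G.E) : CVert G e :=
  if h : G.t f = G.s e ∨ G.t f = G.t e ∨ G.s f = G.s e then Sum.inr ()
  else Sum.inl ⟨G.t f, by push_neg at h; exact ⟨h.1, h.2.1⟩⟩

/-- The MP-contraction `G ⫽ e`. -/
def mpContract (G : DiGraph) (e : G.E) : DiGraph where
  V := CVert G e
  E := {f : G.E // f ≠ e}
  s := fun f => contrS G e f.val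
  t := fun f => contrT G e f.val

/-- The digraph `C̃_e(G)`: the MP-contraction `G ⫽ e` with all loops at the
new vertex `x` deleted. -/
def tildeC (G : DiGraph) (e : G.E) : DiGraph where
  V := CVert G e
  E := {f : G.E // f ≠ e ∧
         ¬(contrS G e f = Sum.inr () ∧ contrT G e f = Sum.inr ())}
  s := fun f => contrS G e f.val
  t := fun f => contrT G e f.val

/-- The classical contraction `G / e` of a non-loop edge `e = (v,w)`:
identify `w` with `v` and delete `e`. -/
def contractClassical (G : DiGraph) (e : G.E) (hne : G.s e ≠ G.t e) : DiGraph where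
  V := {u : G.V // u ≠ G.t e}
  E := {f : G.E // f ≠ e}
  s := fun f => if h : G.s f.val = G.t e then ⟨G.s e, hne⟩ else ⟨G.s f.val, h⟩
  t := fun f => if h : G.t f.val = G.t e then ⟨G.s e, hne⟩ else ⟨G.t f.val, h⟩

/-- A flowing k-colouring of `G`. -/
def IsFlowing (G : DiGraph) (k : ℕ) (c : G.V → Fin k) : Prop :=
  (∀ e : G.E, c (G.s e) ≠ c (G.t e)) ∧
  (∀ e f : G.E, G.t e = G.t f → c (G.s e) = c (G.s f)) ∧
  (∀ e f : G.E, G.s e = G.s f → c (G.t e) = c (G.t f))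

/-- The number of flowing k-colourings of `G`. -/
def tau (G : DiGraph) (k : ℕ) : ℕ :=
  Nat.card {c : G.V → Fin k // IsFlowing G k c}

/-- The spanning subgraph of `G` with edge set `S`. -/
def subgraphOn (G : DiGraph) (S : Finset G.E) : DiGraph where
  V := G.V
  E := {f : G.E // f ∈ S}
  s := fun f => G.s f.val
  t := fun f => G.t f.val

/-- The underlying undirected multigraph of `G` contains a cycle
(of length ≥ 1; a single loop, or two parallel/antiparallel edges, count). -/
def HasUndirCycle (G : DiGraph) : Prop :=
  ∃ (n : ℕ) (ed : Fin n → G.E) (vx : Fin n → G.V),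
    0 < n ∧ Function.Injective ed ∧ Function.Injective vx ∧
    ∀ i : Fin n,
      (G.s (ed i) = vx i ∧ G.t (ed i) = vx ⟨(i.val + 1) % n, Nat.mod_lt _ i.pos⟩) ∨
      (G.t (ed i) = vx i ∧ G.s (ed i) = vx ⟨(i.val + 1) % n, Nat.mod_lt _ i.pos⟩)

/-- The underlying undirected multigraph of `G` is a forest. -/
def IsForestD (G : DiGraph) : Prop := ¬HasUndirCycle G

/-- The underlying undirected multigraph of `G` is a tree. -/
def IsTreeD (G : DiGraph) : Prop := ConnectedD G ∧ IsForestD G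

/-- The multipath matroid of `G` is representable over the field `F`. -/
def RepOver (G : DiGraph) (F : Type) [Field F] : Prop :=
  ∃ (n : ℕ) (N : Matrix (Fin n) G.E F),
    ∀ m : Finset G.E, IsMultipath G m ↔
      LinearIndependent F (fun f : {x : G.E // x ∈ m} => N.transpose f.val)

end DiGraph

/-- A finite undirected multigraph. -/
structure Multigraph where
  V : Type
  E : Type
  [fintV : Fintype V]
  [decV : DecidableEq V]
  [fintE : Fintype E]
  [decE : DecidableEq E]
  ends : E → Sym2 V

attribute [instance] Multigraph.fintV Multigraph.decV Multigraph.fintE Multigraph.decE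

/-- The multigraph `M` has a cycle all of whose edges lie in `F`. -/
def Multigraph.HasCycleIn (M : Multigraph) (F : Finset M.E) : Prop :=
  ∃ (n : ℕ) (ed : Fin n → M.E) (vx : Fin n → M.V),
    0 < n ∧ Function.Injective ed ∧ Function.Injective vx ∧
    (∀ i : Fin n, ed i ∈ F) ∧
    ∀ i : Fin n, M.ends (ed i) = s(vx i, vx ⟨(i.val + 1) % n, Nat.mod_lt _ i.pos⟩)


/-! When a defining condition of a multipath fails, a tiny subgraph already witnesses it: a
loop, two edges with a common source or a common target (a linear source or sink, by edge
uniqueness), or a coherently oriented cycle. Hence a minimal non-multipath is one of these.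
Conversely, a proper subset of a linear sink or source is at most one non-loop edge, and a
proper subset of a cycle has in- and out-degrees at most one and contains no cycle, because a
coherently oriented cycle whose edges lie in another one is all of it. -/

theorem Fin.eq_univ_of_mapsTo_finRotate {n : ℕ} {S : Set (Fin n)}
    (hS : Set.MapsTo (finRotate n) S S) (hne : S.Nonempty) : S = Set.univ := by
  obtain ⟨i₀, hi₀⟩ := hne
  have := i₀.neZero
  refine Set.eq_univ_of_forall fun j => ?_
  simpa [← finCycle_eq_finRotate_iterate] using hS.iterate (j - i₀).val hi₀

namespace DiGraph

variable {G : DiGraph}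

theorem isCohCycle_singleton {e : G.E} : G.IsCohCycle [e] ↔ G.s e = G.t e := by
  simp [IsCohCycle, eq_comm]

namespace IsCohCycle

variable {c : List G.E} (hc : G.IsCohCycle c)
include hc

theorem t_get (i : Fin c.length) : G.t (c.get i) = G.s (c.get (finRotate _ i)) := by
  have := i.neZero
  rw [hc.2.2.2 i]
  congr 2
  ext
  simp [Fin.val_add]

theorem injOn_s {x y : G.E} (hx : x ∈ c) (hy : y ∈ c) (h : G.s x = G.s y) : x = y :=
  List.inj_on_of_nodup_map hc.2.2.1 hx hy h

theorem get_injective : Function.Injective c.get :=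
  List.nodup_iff_injective_get.mp hc.2.1

theorem injOn_t {x y : G.E} (hx : x ∈ c) (hy : y ∈ c) (h : G.t x = G.t y) : x = y := by
  obtain ⟨i, rfl⟩ := List.mem_iff_get.mp hx
  obtain ⟨j, rfl⟩ := List.mem_iff_get.mp hy
  rw [hc.t_get, hc.t_get] at h
  exact congrArg c.get
    ((finRotate _).injective (hc.get_injective (hc.injOn_s (c.get_mem _) (c.get_mem _) h)))

theorem s_ne_t (hlen : 2 ≤ c.length) {x : G.E} (hx : x ∈ c) : G.s x ≠ G.t x := by
  obtain ⟨i, rfl⟩ := List.mem_iff_get.mp hx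
  intro h
  rw [hc.t_get] at h
  have hfix : finRotate _ i = i :=
    hc.get_injective (hc.injOn_s (c.get_mem _) (c.get_mem _) h).symm
  exact Equiv.Perm.mem_support.mp (by simp [support_finRotate_of_le hlen]) hfix

theorem exists_s_eq_t {x : G.E} (hx : x ∈ c) : ∃ y ∈ c, G.s y = G.t x := by
  obtain ⟨i, rfl⟩ := List.mem_iff_get.mp hx
  exact ⟨_, c.get_mem _, (hc.t_get i).symm⟩

-- The edges of `c'` are closed under the successor in `c`, as an edge of `c` is determined by
-- its source.
theorem subset_of_subset {c' : List G.E} (hc' : G.IsCohCycle c') (hsub : c' ⊆ c) : c ⊆ c' := by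
  have hclosed : Set.MapsTo (finRotate _) {i | c.get i ∈ c'} {i | c.get i ∈ c'} := by
    intro i hi
    obtain ⟨y, hy, hyt⟩ := hc'.exists_s_eq_t hi
    rw [Set.mem_ofPred_eq, hc.injOn_s (c.get_mem _) (hsub hy) (by rw [← hc.t_get, hyt])]
    exact hy
  obtain ⟨z, hz⟩ := List.exists_mem_of_ne_nil c' hc'.1
  obtain ⟨i₀, hi₀⟩ := List.mem_iff_get.mp (hsub hz)
  have hall := Fin.eq_univ_of_mapsTo_finRotate hclosed ⟨i₀, show c.get i₀ ∈ c' from hi₀ ▸ hz⟩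
  intro x hx
  obtain ⟨j, rfl⟩ := List.mem_iff_get.mp hx
  exact Set.eq_univ_iff_forall.mp hall j

end IsCohCycle

theorem isMultipath_of_card_le_one {m : Finset G.E} (hloop : ∀ e ∈ m, G.s e ≠ G.t e)
    (hcard : m.card ≤ 1) : G.IsMultipath m := by
  refine ⟨hloop, fun e he f hf _ => Finset.card_le_one.mp hcard e he f hf,
    fun e he f hf _ => Finset.card_le_one.mp hcard e he f hf, ?_⟩
  rintro ⟨c, hc, hcm⟩
  obtain ⟨g, rfl⟩ : ∃ g, c = [g] := by
    refine List.length_eq_one_iff.mp (le_antisymm ?_ (List.length_pos_iff.mpr hc.1))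
    rw [← List.toFinset_card_of_nodup hc.2.1]
    exact (Finset.card_le_card fun g hg => hcm g (List.mem_toFinset.mp hg)).trans hcard
  exact hloop g (hcm g (by simp)) (isCohCycle_singleton.mp hc)

theorem isMultipath_of_ssubset_pair {e₁ e₂ : G.E} (h₁ : G.s e₁ ≠ G.t e₁) (h₂ : G.s e₂ ≠ G.t e₂)
    {m : Finset G.E} (hm : m ⊂ {e₁, e₂}) : G.IsMultipath m := by
  refine isMultipath_of_card_le_one (fun e he => ?_) ?_
  · rcases Finset.mem_insert.mp (hm.subset he) with rfl | he
    · exact h₁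
    · rw [Finset.mem_singleton.mp he]; exact h₂
  · have := (Finset.card_lt_card hm).trans_le Finset.card_le_two
    omega

theorem IsCohCycleSet.isMultipath_of_ssubset {S m : Finset G.E} (hS : G.IsCohCycleSet S)
    (hm : m ⊂ S) : G.IsMultipath m := by
  obtain ⟨c, hc, rfl⟩ := hS
  have hmc : ∀ {e}, e ∈ m → e ∈ c := fun he => List.mem_toFinset.mp (hm.subset he)
  by_cases hlen : 2 ≤ c.length
  · refine ⟨fun e he => hc.s_ne_t hlen (hmc he),
      fun e he f hf => hc.injOn_s (hmc he) (hmc hf),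
      fun e he f hf => hc.injOn_t (hmc he) (hmc hf), ?_⟩
    rintro ⟨c', hc', hc'm⟩
    have hcc' := hc.subset_of_subset hc' fun g hg => hmc (hc'm g hg)
    exact hm.not_subset fun g hg => hc'm g (hcc' (List.mem_toFinset.mp hg))
  · obtain ⟨g, rfl⟩ : ∃ g, c = [g] :=
      List.length_eq_one_iff.mp (by have := List.length_pos_iff.mpr hc.1; omega)
    obtain rfl : m = ∅ := by simpa using hm
    exact isMultipath_of_card_le_one (by simp) (by simp)

theorem IsLinearSinkSet.not_isMultipath {m : Finset G.E} (h : G.IsLinearSinkSet m) :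
    ¬G.IsMultipath m := by
  obtain ⟨e₁, e₂, hne, rfl, ht, -⟩ := h
  exact fun hm => hne (hm.2.2.1 e₁ (by simp) e₂ (by simp) ht)

theorem IsLinearSourceSet.not_isMultipath {m : Finset G.E} (h : G.IsLinearSourceSet m) :
    ¬G.IsMultipath m := by
  obtain ⟨e₁, e₂, hne, rfl, hs, -⟩ := h
  exact fun hm => hne (hm.2.1 e₁ (by simp) e₂ (by simp) hs)

theorem IsCohCycleSet.not_isMultipath {m : Finset G.E} (h : G.IsCohCycleSet m) :
    ¬G.IsMultipath m := by
  obtain ⟨c, hc, rfl⟩ := h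
  exact fun hm => hm.2.2.2 ⟨c, hc, fun g => List.mem_toFinset.mpr⟩

theorem exists_subset_of_not_isMultipath (hU : G.EdgeUnique) {m : Finset G.E}
    (hm : ¬G.IsMultipath m) :
    ∃ S ⊆ m, G.IsLinearSinkSet S ∨ G.IsLinearSourceSet S ∨ G.IsCohCycleSet S := by
  by_cases hloop : ∃ e ∈ m, G.s e = G.t e
  · obtain ⟨e, he, hl⟩ := hloop
    exact ⟨{e}, by simpa using he, .inr (.inr ⟨[e], isCohCycle_singleton.mpr hl, by simp⟩)⟩
  push Not at hloop
  by_cases hsrc : ∃ e ∈ m, ∃ f ∈ m, e ≠ f ∧ G.s e = G.s f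
  · obtain ⟨e, he, f, hf, hef, hs⟩ := hsrc
    exact ⟨{e, f}, Finset.insert_subset he (by simpa using hf), .inr (.inl
      ⟨e, f, hef, rfl, hs, fun ht => hef (hU e f hs ht (hloop e he)), hloop e he, hloop f hf⟩)⟩
  by_cases htgt : ∃ e ∈ m, ∃ f ∈ m, e ≠ f ∧ G.t e = G.t f
  · obtain ⟨e, he, f, hf, hef, ht⟩ := htgt
    exact ⟨{e, f}, Finset.insert_subset he (by simpa using hf), .inl
      ⟨e, f, hef, rfl, ht, fun hs => hef (hU e f hs ht (hloop e he)), hloop e he, hloop f hf⟩⟩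
  obtain ⟨c, hc, hcm⟩ : ∃ c, G.IsCohCycle c ∧ ∀ g ∈ c, g ∈ m := by
    by_contra hno
    exact hm ⟨hloop, fun e he f hf hs => by_contra fun hef => hsrc ⟨e, he, f, hf, hef, hs⟩,
      fun e he f hf ht => by_contra fun hef => htgt ⟨e, he, f, hf, hef, ht⟩, hno⟩
  exact ⟨c.toFinset, fun g hg => hcm g (List.mem_toFinset.mp hg), .inr (.inr ⟨c, hc, rfl⟩)⟩

end DiGraph

open DiGraph in
/-- A spanning subgraph `G'` of `G` (given by its edge set
`m`) which is not a multipath is minimal by inclusion among such if and only if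
it is the disjoint union of some isolated vertices with either a linear sink,
a linear source, or a coherently oriented cycle (possibly a loop). -/
theorem minimal_non_multipath_classification (G : DiGraph) (hU : G.EdgeUnique)
    (m : Finset G.E) (hm : ¬G.IsMultipath m) :
    (∀ m' : Finset G.E, m' ⊂ m → G.IsMultipath m') ↔
      (IsLinearSinkSet G m ∨ IsLinearSourceSet G m ∨ IsCohCycleSet G m) := by
  constructor
  · intro hmin
    obtain ⟨S, hSm, hS⟩ := exists_subset_of_not_isMultipath hU hm
    have hSnot : ¬G.IsMultipath S := by
      rcases hS with h | h | h
      exacts [h.not_isMultipath, h.not_isMultipath, h.not_isMultipath]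
    obtain rfl : S = m := by
      by_contra hne
      exact hSnot (hmin S (Finset.ssubset_iff_subset_ne.mpr ⟨hSm, hne⟩))
    exact hS
  · rintro (⟨e₁, e₂, -, rfl, -, -, h₁, h₂⟩ | ⟨e₁, e₂, -, rfl, -, -, h₁, h₂⟩ | hc) m' hm'
    · exact isMultipath_of_ssubset_pair h₁ h₂ hm'
    · exact isMultipath_of_ssubset_pair h₁ h₂ hm'
    · exact hc.isMultipath_of_ssubset hm'
end
end

section
/- Let G be a digraph without loops, and let A and B be minimal spanning subgraphs of G that are not multipaths, with E(A) ∩ E(B) ≠ ∅. Suppose that A contains a linear sink or a linear source, that B contains a coherently oriented cycle, and that the cycle contained in B is the unique coherently oriented cycle in A ∪ B. Then there exists an edge x ∈ E(A) ∩ E(B) such that the spanning subgraph with edge set E(A) ∪ E(B) \ {x} is a multipath of G. -/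
set_option autoImplicit false

noncomputable section

attribute [local instance] Classical.propDecidable

/-!
Minimality pins both subgraphs down: `A` is exactly a linear sink or source `{e₁, e₂}` and `B` is
exactly the edge set of `c`. Distinct edges of a coherently oriented cycle have distinct sources
and distinct targets, so exactly one of `e₁, e₂`, say `e₁`, lies on `c`; we delete `x = e₁`.
No coherently oriented cycle survives, since the only one in `A ∪ B` passes through `e₁`. A
clash of sources or targets between `e₂` and an edge of `c - e₁` would make `e₂` a chord from a
vertex of `c` to a vertex of `c`, and such a chord closes a second coherently oriented cycle with
an arc of `c`, which contradicts uniqueness.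
-/

namespace DiGraph

variable {G : DiGraph}

theorem isCohCycle_iff {c : List G.E} :
    G.IsCohCycle c ↔
      c ≠ [] ∧ c.Nodup ∧ (c.map G.s).Nodup ∧ c.map G.t = (c.map G.s).rotate 1 := by
  refine and_congr_right fun _ => and_congr_right fun _ => and_congr_right fun _ => ?_
  rw [List.ext_getElem_iff]
  simp [List.getElem_rotate, Fin.forall_iff]

namespace IsCohCycle

variable {c : List G.E}

theorem rotate (hc : G.IsCohCycle c) (n : ℕ) : G.IsCohCycle (c.rotate n) := by
  obtain ⟨hne, hnd, hs, hts⟩ := isCohCycle_iff.1 hc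
  refine isCohCycle_iff.2 ⟨by simpa using hne, List.nodup_rotate.2 hnd, ?_, ?_⟩
  · rwa [List.map_rotate, List.nodup_rotate]
  · rw [List.map_rotate, List.map_rotate, hts, List.rotate_rotate, List.rotate_rotate, add_comm]

theorem injOn_s_s3 (hc : G.IsCohCycle c) : Set.InjOn G.s {e | e ∈ c} :=
  fun _ he _ hf h => List.inj_on_of_nodup_map hc.2.2.1 he hf h

theorem nodup_map_t (hc : G.IsCohCycle c) : (c.map G.t).Nodup := by
  obtain ⟨-, -, hs, hts⟩ := isCohCycle_iff.1 hc
  exact hts ▸ List.nodup_rotate.2 hs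

theorem injOn_t_s3 (hc : G.IsCohCycle c) : Set.InjOn G.t {e | e ∈ c} :=
  fun _ he _ hf h => List.inj_on_of_nodup_map hc.nodup_map_t he hf h

theorem exists_isCohCycle_of_chord (hc : G.IsCohCycle c) {a b e : G.E} (ha : a ∈ c)
    (hb : b ∈ c) (he : e ∉ c) (hs : G.s e = G.s a) (ht : G.t e = G.t b) :
    ∃ c' : List G.E, G.IsCohCycle c' ∧ e ∈ c' ∧ ∀ g ∈ c', g = e ∨ g ∈ c := by
  obtain ⟨p, q, rfl⟩ := List.append_of_mem hb
  obtain ⟨n, hn⟩ := List.isRotated_append (l := p) (l' := b :: q)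
  set l := q ++ p
  have hrot : G.IsCohCycle (b :: l) := by
    have := hc.rotate n
    rwa [hn, List.cons_append] at this
  have hmem : ∀ g, g ∈ l ++ [b] ↔ g ∈ p ++ b :: q := fun g => by
    simp only [l, List.mem_append, List.mem_cons]
    tauto
  obtain ⟨-, hnd, -, hts⟩ := isCohCycle_iff.1 hrot
  obtain ⟨l₁, l₂, hl⟩ := List.append_of_mem ((hmem a).2 ha)
  have hlen : l₁.length ≤ l.length := by
    have := congrArg List.length hl
    simp only [List.length_append, List.length_cons, List.length_nil] at this
    omega
  have htake : l.take l₁.length = l₁ := by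
    rw [← List.take_append_of_le_length hlen, hl, List.take_left]
  have hwalk : (b :: l₁).map G.t = (l₁ ++ [a]).map G.s := by
    have hclosed : (b :: l).map G.t = (l ++ [b]).map G.s := by simpa using hts
    rw [hl] at hclosed
    have := congrArg (List.take (l₁.length + 1)) hclosed
    simpa [← List.map_take, htake, List.take_append, List.take_of_length_le] using this
  have hsub : l₁.Sublist l := htake ▸ List.take_sublist _ _
  have hsrc : (l₁.map G.s ++ [G.s e]).Nodup := by
    have := hrot.nodup_map_t.sublist ((hsub.cons_cons b).map G.t)
    rwa [hwalk, List.map_append, List.map_singleton, ← hs] at this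
  have hl₁c : ∀ g ∈ l₁, g ∈ p ++ b :: q := fun g hg =>
    (hmem g).1 (List.mem_append_left _ (hsub.subset hg))
  refine ⟨e :: l₁, isCohCycle_iff.2 ⟨List.cons_ne_nil _ _, ?_, ?_, ?_⟩, List.mem_cons_self, ?_⟩
  · exact List.nodup_cons.2 ⟨fun h => he (hl₁c e h), hnd.sublist (hsub.cons b)⟩
  · simpa using List.nodup_append_comm.1 hsrc
  · simpa [ht, hs] using hwalk
  · simpa using fun g hg => Or.inr (hl₁c g hg)

theorem not_isMultipath (hc : G.IsCohCycle c) {m : Finset G.E} (hcm : ∀ g ∈ c, g ∈ m) :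
    ¬G.IsMultipath m :=
  fun hm => hm.2.2.2 ⟨c, hc, hcm⟩

end IsCohCycle

theorem not_isMultipath_pair {e₁ e₂ : G.E} (hne : e₁ ≠ e₂)
    (hend : G.t e₁ = G.t e₂ ∨ G.s e₁ = G.s e₂) : ¬G.IsMultipath {e₁, e₂} := by
  rintro ⟨-, hs, ht, -⟩
  rcases hend with h | h
  · exact hne (ht e₁ (by simp) e₂ (by simp) h)
  · exact hne (hs e₁ (by simp) e₂ (by simp) h)

theorem isMultipath_insert_erase (hll : G.Loopless) {c : List G.E} (hc : G.IsCohCycle c)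
    {e₁ e₂ : G.E} (he₁ : e₁ ∈ c) (he₂ : e₂ ∉ c) (hend : G.t e₂ = G.t e₁ ∨ G.s e₂ = G.s e₁)
    (huniq : ∀ c' : List G.E, G.IsCohCycle c' → (∀ g ∈ c', g = e₂ ∨ g ∈ c) →
      c'.toFinset = c.toFinset) :
    G.IsMultipath (insert e₂ (c.toFinset.erase e₁)) := by
  have hchord : ∀ a ∈ c, ∀ b ∈ c, G.s e₂ = G.s a → G.t e₂ ≠ G.t b := by
    intro a ha b hb hs ht
    obtain ⟨c', hc', he₂c', hc'c⟩ := hc.exists_isCohCycle_of_chord ha hb he₂ hs ht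
    rw [← List.mem_toFinset, ← huniq c' hc' hc'c, List.mem_toFinset] at he₂
    exact he₂ he₂c'
  have hnot : e₂ ∉ (↑(c.toFinset.erase e₁) : Set G.E) := by simp [he₂]
  have hsub : (↑(c.toFinset.erase e₁) : Set G.E) ⊆ {e | e ∈ c} := by simp
  refine ⟨fun e _ => hll e, ?_, ?_, ?_⟩
  · show Set.InjOn G.s ↑(insert e₂ (c.toFinset.erase e₁))
    rw [Finset.coe_insert, Set.injOn_insert hnot]
    refine ⟨hc.injOn_s_s3.mono hsub, ?_⟩
    rintro ⟨f, hf, hsf⟩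
    rw [Finset.mem_coe, Finset.mem_erase, List.mem_toFinset] at hf
    rcases hend with ht | hs
    · exact hchord f hf.2 e₁ he₁ hsf.symm ht
    · exact hf.1 (hc.injOn_s_s3 hf.2 he₁ (hsf.trans hs))
  · show Set.InjOn G.t ↑(insert e₂ (c.toFinset.erase e₁))
    rw [Finset.coe_insert, Set.injOn_insert hnot]
    refine ⟨hc.injOn_t_s3.mono hsub, ?_⟩
    rintro ⟨f, hf, htf⟩
    rw [Finset.mem_coe, Finset.mem_erase, List.mem_toFinset] at hf
    rcases hend with ht | hs
    · exact hf.1 (hc.injOn_t_s3 hf.2 he₁ (htf.trans ht))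
    · exact hchord e₁ he₁ f hf.2 hs htf.symm
  · rintro ⟨c', hc', hc'm⟩
    have hc'c := huniq c' hc' fun g hg =>
      (by simpa using hc'm g hg : g = e₂ ∨ g ≠ e₁ ∧ g ∈ c).imp_right And.right
    have he₁c' : e₁ ∈ c' := by rw [← List.mem_toFinset, hc'c, List.mem_toFinset]; exact he₁
    have : e₁ = e₂ := by simpa using hc'm e₁ he₁c'
    exact he₂ (this ▸ he₁)

theorem exists_isMultipath_pair_union_sdiff (hll : G.Loopless) {c : List G.E}
    (hc : G.IsCohCycle c) {e₁ e₂ : G.E} (hne : e₁ ≠ e₂)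
    (hend : G.t e₁ = G.t e₂ ∨ G.s e₁ = G.s e₂) (hmeet : ({e₁, e₂} ∩ c.toFinset).Nonempty)
    (huniq : ∀ c' : List G.E, G.IsCohCycle c' → (∀ g ∈ c', g ∈ {e₁, e₂} ∪ c.toFinset) →
      c'.toFinset = c.toFinset) :
    ∃ x ∈ {e₁, e₂} ∩ c.toFinset, G.IsMultipath (({e₁, e₂} ∪ c.toFinset) \ {x}) := by
  wlog he₁ : e₁ ∈ c generalizing e₁ e₂
  · have he₂ : e₂ ∈ c := by
      obtain ⟨x, hx⟩ := hmeet
      simp only [Finset.mem_inter, Finset.mem_insert, Finset.mem_singleton,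
        List.mem_toFinset] at hx
      rcases hx with ⟨rfl | rfl, hx⟩
      exacts [absurd hx he₁, hx]
    rw [Finset.pair_comm] at hmeet huniq ⊢
    exact this hne.symm (hend.imp Eq.symm Eq.symm) hmeet huniq he₂
  have he₂ : e₂ ∉ c := fun he₂ => hne (hend.elim (hc.injOn_t_s3 he₁ he₂) (hc.injOn_s_s3 he₁ he₂))
  have hset : ({e₁, e₂} ∪ c.toFinset) \ {e₁} = insert e₂ (c.toFinset.erase e₁) := by
    ext g
    simp only [Finset.mem_sdiff, Finset.mem_union, Finset.mem_insert, Finset.mem_singleton,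
      Finset.mem_erase, List.mem_toFinset]
    constructor
    · rintro ⟨(h | h) | h, hg⟩ <;> tauto
    · rintro (rfl | ⟨hg, h⟩) <;> tauto
  refine ⟨e₁, by simp [he₁], hset ▸ ?_⟩
  refine isMultipath_insert_erase hll hc he₁ he₂ (hend.imp Eq.symm Eq.symm) fun c' hc' hc'c =>
    huniq c' hc' fun g hg => ?_
  rcases hc'c g hg with rfl | h <;> simp [*]

end DiGraph

open DiGraph in
theorem lemma_C2_general (G : DiGraph) (hll : G.Loopless)
    (A B : Finset G.E)
    (hAmin : ∀ m : Finset G.E, m ⊂ A → G.IsMultipath m)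
    (hBmin : ∀ m : Finset G.E, m ⊂ B → G.IsMultipath m)
    (hAB : (A ∩ B).Nonempty)
    (hsink : ∃ m : Finset G.E, m ⊆ A ∧ (IsLinearSinkSet G m ∨ IsLinearSourceSet G m))
    (c : List G.E) (hc : G.IsCohCycle c) (hcB : ∀ g ∈ c, g ∈ B)
    (huniq : ∀ c' : List G.E, G.IsCohCycle c' → (∀ g ∈ c', g ∈ A ∪ B) →
      c'.toFinset = c.toFinset) :
    ∃ x ∈ A ∩ B, G.IsMultipath ((A ∪ B) \ {x}) := by
  obtain ⟨e₁, e₂, hne, hsub, hend⟩ : ∃ e₁ e₂ : G.E, e₁ ≠ e₂ ∧ {e₁, e₂} ⊆ A ∧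
      (G.t e₁ = G.t e₂ ∨ G.s e₁ = G.s e₂) := by
    obtain ⟨m, hmA, ⟨e₁, e₂, hne, rfl, h, -⟩ | ⟨e₁, e₂, hne, rfl, h, -⟩⟩ := hsink
    exacts [⟨e₁, e₂, hne, hmA, .inl h⟩, ⟨e₁, e₂, hne, hmA, .inr h⟩]
  obtain rfl : {e₁, e₂} = A := hsub.eq_of_not_ssubset fun h =>
    not_isMultipath_pair hne hend (hAmin _ h)
  have hcB' : c.toFinset ⊆ B := fun g hg => hcB g (List.mem_toFinset.1 hg)
  obtain rfl : c.toFinset = B := hcB'.eq_of_not_ssubset fun h =>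
    hc.not_isMultipath (fun g hg => List.mem_toFinset.2 hg) (hBmin _ h)
  exact exists_isMultipath_pair_union_sdiff hll hc hne hend hAB huniq

open DiGraph in
/-- Let `G` be loopless and let `A, B` be minimal
non-multipath spanning subgraphs with a common edge; if `A` contains a linear
sink or source, `B` contains a coherently oriented cycle `c`, and `c` is the
unique coherently oriented cycle in `A ∪ B`, then there is an edge
`x ∈ A ∩ B` such that `A ∪ B \ {x}` is a multipath. -/
theorem lemma_C2 (G : DiGraph) (hU : G.EdgeUnique) (hll : G.Loopless)
    (A B : Finset G.E)
    (hA : ¬G.IsMultipath A) (hAmin : ∀ m : Finset G.E, m ⊂ A → G.IsMultipath m)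
    (hB : ¬G.IsMultipath B) (hBmin : ∀ m : Finset G.E, m ⊂ B → G.IsMultipath m)
    (hAB : (A ∩ B).Nonempty)
    (hsink : ∃ m : Finset G.E, m ⊆ A ∧ (IsLinearSinkSet G m ∨ IsLinearSourceSet G m))
    (c : List G.E) (hc : G.IsCohCycle c) (hcB : ∀ g ∈ c, g ∈ B)
    (huniq : ∀ c' : List G.E, G.IsCohCycle c' → (∀ g ∈ c', g ∈ A ∪ B) →
      c'.toFinset = c.toFinset) :
    ∃ x ∈ A ∩ B, G.IsMultipath ((A ∪ B) \ {x}) :=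
  lemma_C2_general G hll A B hAmin hBmin hAB hsink c hc hcB huniq
end
end

section
/- For every MP-digraph G, the multipath matroid M_G is a binary matroid, i.e., it is representable over the two-element field F_2. -/
set_option autoImplicit false

noncomputable section

attribute [local instance] Classical.propDecidable

/-!
Give every edge a vector over `𝔽₂` indexed by `V ⊕ E`; loops get `0`. By (MP2) a coherently
oriented cycle of length at least two is a whole component, and a set of its edges is a multipath
iff it misses an edge of the cycle, so these edges get their incidence vectors, as in the graphic
matroid of the cycle. (MP1) makes "non-loops with a common source or a common target" a transitive
relation, so a multipath meets each of its classes at most once; the remaining non-loop edges get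
the indicator vector of their class. Conversely, a vanishing sum over a multipath can only involve
cycle edges, and the parity count at each vertex forces it to contain a whole cycle.
-/

theorem linearIndependent_zmod_two_iff {ι M : Type*} [AddCommGroup M] [Module (ZMod 2) M]
    {v : ι → M} :
    LinearIndependent (ZMod 2) v ↔ ∀ s : Finset ι, ∑ i ∈ s, v i = 0 → s = ∅ := by
  classical
  rw [linearIndependent_iff']
  constructor
  · intro h s hs
    by_contra hne
    obtain ⟨i, hi⟩ := Finset.nonempty_iff_ne_empty.mpr hne
    exact one_ne_zero (h s 1 (by simpa using hs) i hi)
  · intro h s g hg i hi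
    have hg01 : ∀ j, g j = 0 ∨ g j = 1 := fun j => by generalize g j = a; revert a; decide
    have hsupp : s.filter (g · = 1) = ∅ := h _ <| by
      rw [Finset.sum_filter]
      refine Eq.trans (Finset.sum_congr rfl fun j _ => ?_) hg
      rcases hg01 j with hj | hj <;> simp [hj]
    exact (hg01 i).resolve_right fun h1 =>
      Finset.notMem_empty i (hsupp ▸ Finset.mem_filter.mpr ⟨hi, h1⟩)

theorem linearIndepOn_zmod_two_iff {ι M : Type*} [AddCommGroup M] [Module (ZMod 2) M]
    {v : ι → M} {s : Finset ι} :
    LinearIndepOn (ZMod 2) v ↑s ↔ ∀ t ⊆ s, ∑ i ∈ t, v i = 0 → t = ∅ := by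
  classical
  rw [LinearIndepOn, linearIndependent_zmod_two_iff]
  constructor
  · intro h t hts ht
    have hmap := Finset.subtype_map_of_mem (p := (· ∈ (s : Set ι))) fun x hx => hts hx
    rw [← hmap, Finset.sum_map] at ht
    rw [← hmap, h _ ht, Finset.map_empty]
  · intro h t ht
    have := h (t.map (Function.Embedding.subtype _)) (fun x hx => by
      obtain ⟨y, -, rfl⟩ := Finset.mem_map.mp hx; exact y.2) (by rwa [Finset.sum_map])
    simpa using this

theorem finRotate_val {n : ℕ} (i : Fin n) : (finRotate n i).val = (i.val + 1) % n := by
  have := i.neZero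
  rw [finRotate_apply, Fin.val_add, Fin.val_one', Nat.add_mod_mod]

theorem forall_of_finRotate_invariant {n : ℕ} {p : Fin n → Prop}
    (hp : ∀ i, p (finRotate n i) ↔ p i) {i : Fin n} (hi : p i) (j : Fin n) : p j := by
  have hzero : ∀ k (hk : k < n), p ⟨k, hk⟩ ↔ p ⟨0, by omega⟩ := by
    intro k
    induction k with
    | zero => exact fun _ => Iff.rfl
    | succ k ih =>
      intro hk
      have hrot : finRotate n ⟨k, by omega⟩ = ⟨k + 1, hk⟩ :=
        Fin.ext (by rw [finRotate_val, Nat.mod_eq_of_lt hk])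
      rw [← ih (by omega), ← hrot, hp]
  exact (hzero j j.2).mpr ((hzero i i.2).mp hi)

namespace DiGraph

variable {G : DiGraph} {c : List G.E} {e f x y z : G.E} {m S : Finset G.E}

theorem IsCohCycle.target_get (hc : G.IsCohCycle c) (i : Fin c.length) :
    G.t (c.get i) = G.s (c.get (finRotate _ i)) := by
  rw [hc.2.2.2 i]
  congr 2
  exact Fin.ext (finRotate_val i).symm

theorem IsCohCycle.source_injective (hc : G.IsCohCycle c) :
    Function.Injective fun i => G.s (c.get i) := fun i j h =>
  Fin.ext <| (hc.2.2.1.getElem_inj_iff (i := i) (j := j) (hi := by simp) (hj := by simp)).mp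
    (by simpa using h)

theorem IsCohCycle.target_injective (hc : G.IsCohCycle c) :
    Function.Injective fun i => G.t (c.get i) := by
  intro i j h
  simp only [hc.target_get] at h
  exact (finRotate _).injective (hc.source_injective h)

theorem IsCohCycle.source_ne_target (hc : G.IsCohCycle c) (hlen : 2 ≤ c.length)
    (he : e ∈ c) : G.s e ≠ G.t e := by
  obtain ⟨i, rfl⟩ := List.mem_iff_get.mp he
  intro h
  rw [hc.target_get] at h
  have hfix : finRotate _ i ≠ i :=
    Equiv.Perm.mem_support.mp (by simp [support_finRotate_of_le hlen])
  exact hfix (hc.source_injective h).symm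

theorem IsCohCycle.source_eq_target_of_length_eq_one (hc : G.IsCohCycle c) (h : c.length = 1)
    (he : e ∈ c) : G.s e = G.t e := by
  obtain ⟨i, rfl⟩ := List.mem_iff_get.mp he
  have hfix : finRotate _ i = i := Fin.ext (by have := (finRotate _ i).isLt; omega)
  rw [hc.target_get, hfix]

def OnLongCohCycle (G : DiGraph) (e : G.E) : Prop :=
  ∃ c : List G.E, G.IsCohCycle c ∧ 2 ≤ c.length ∧ e ∈ c

theorem MP2.eq_get_of_source_eq (h2 : G.MP2) (hc : G.IsCohCycle c) (hlen : 2 ≤ c.length)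
    {i : Fin c.length} (h : G.s f = G.s (c.get i)) : f = c.get i := by
  have hfc : f ∈ c := h2 c hc hlen f ⟨c.get i, List.get_mem _ _, Or.inl h.symm⟩
  obtain ⟨j, rfl⟩ := List.mem_iff_get.mp hfc
  rw [hc.source_injective h]

theorem MP2.eq_get_of_target_eq (h2 : G.MP2) (hc : G.IsCohCycle c) (hlen : 2 ≤ c.length)
    {i : Fin c.length} (h : G.t f = G.t (c.get i)) : f = c.get i := by
  have hfc : f ∈ c := h2 c hc hlen f
    ⟨c.get (finRotate _ i), List.get_mem _ _, Or.inr (by rw [h, hc.target_get])⟩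
  obtain ⟨j, rfl⟩ := List.mem_iff_get.mp hfc
  rw [hc.target_injective h]

theorem MP2.not_onLongCohCycle_of_source_eq (h2 : G.MP2) (hef : e ≠ f) (h : G.s e = G.s f) :
    ¬G.OnLongCohCycle e := by
  rintro ⟨c, hc, hlen, he⟩
  obtain ⟨i, rfl⟩ := List.mem_iff_get.mp he
  exact hef (h2.eq_get_of_source_eq hc hlen h.symm).symm

theorem MP2.not_onLongCohCycle_of_target_eq (h2 : G.MP2) (hef : e ≠ f) (h : G.t e = G.t f) :
    ¬G.OnLongCohCycle e := by
  rintro ⟨c, hc, hlen, he⟩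
  obtain ⟨i, rfl⟩ := List.mem_iff_get.mp he
  exact hef (h2.eq_get_of_target_eq hc hlen h.symm).symm

def SharesSourceOrTarget (G : DiGraph) (e f : G.E) : Prop :=
  G.s e ≠ G.t e ∧ G.s f ≠ G.t f ∧ (G.s e = G.s f ∨ G.t e = G.t f)

def Linked (G : DiGraph) : G.E → G.E → Prop := Relation.EqvGen G.SharesSourceOrTarget

theorem SharesSourceOrTarget.symm (h : G.SharesSourceOrTarget e f) :
    G.SharesSourceOrTarget f e :=
  ⟨h.2.1, h.1, h.2.2.imp Eq.symm Eq.symm⟩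

theorem MP1.source_eq_or_target_eq_of_source_target (h1 : G.MP1) (hx : G.s x ≠ G.t x)
    (hy : G.s y ≠ G.t y) (hz : G.s z ≠ G.t z) (hxy : G.s x = G.s y) (hyz : G.t y = G.t z) :
    G.s x = G.s z ∨ G.t x = G.t z := by
  by_contra! ⟨hs, ht⟩
  have htxy : G.t x ≠ G.t y := fun h => ht (h.trans hyz)
  by_cases hxz : G.t x = G.s z
  · exact h1.2.1 ⟨G.t x, G.t y, G.s x, htxy, fun h => hx h.symm,
      fun h => hy (hxy.symm.trans h.symm), ⟨z, hxz.symm, hyz.symm⟩, ⟨x, rfl, rfl⟩,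
      ⟨y, hxy.symm, rfl⟩⟩
  · exact h1.2.2.2 ⟨G.t x, G.s x, G.t y, G.s z, fun h => hx h.symm, htxy, hxz,
      fun h => hy (hxy.symm.trans h), hs, fun h => hz (by rw [← h, hyz]),
      ⟨x, rfl, rfl⟩, ⟨y, hxy.symm, rfl⟩, ⟨z, rfl, hyz.symm⟩⟩

theorem MP1.source_eq_or_target_eq_of_target_source (h1 : G.MP1) (hx : G.s x ≠ G.t x)
    (hy : G.s y ≠ G.t y) (hz : G.s z ≠ G.t z) (hxy : G.t x = G.t y) (hyz : G.s y = G.s z) :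
    G.s x = G.s z ∨ G.t x = G.t z := by
  by_contra! ⟨hs, ht⟩
  have hsxy : G.s x ≠ G.s y := fun h => hs (h.trans hyz)
  by_cases hxz : G.s x = G.t z
  · exact h1.1 ⟨G.s x, G.s y, G.t x, hsxy, hx, fun h => hy (h.trans hxy),
      ⟨z, hyz.symm, hxz.symm⟩, ⟨x, rfl, rfl⟩, ⟨y, rfl, hxy.symm⟩⟩
  · exact h1.2.2.1 ⟨G.s x, G.t x, G.s y, G.t z, hx, hsxy, hxz,
      fun h => hy (h.symm.trans hxy), ht, fun h => hz (hyz.symm.trans h),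
      ⟨x, rfl, rfl⟩, ⟨y, rfl, hxy.symm⟩, ⟨z, hyz.symm, rfl⟩⟩

theorem MP1.sharesSourceOrTarget_trans (h1 : G.MP1) (hxy : G.SharesSourceOrTarget x y)
    (hyz : G.SharesSourceOrTarget y z) : G.SharesSourceOrTarget x z := by
  obtain ⟨hx, hy, hxy⟩ := hxy
  obtain ⟨-, hz, hyz⟩ := hyz
  refine ⟨hx, hz, ?_⟩
  rcases hxy with hxy | hxy <;> rcases hyz with hyz | hyz
  · exact Or.inl (hxy.trans hyz)
  · exact h1.source_eq_or_target_eq_of_source_target hx hy hz hxy hyz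
  · exact h1.source_eq_or_target_eq_of_target_source hx hy hz hxy hyz
  · exact Or.inr (hxy.trans hyz)

theorem MP1.eq_or_sharesSourceOrTarget_of_linked (h1 : G.MP1) (h : G.Linked x y) :
    x = y ∨ G.SharesSourceOrTarget x y := by
  induction h with
  | rel _ _ h => exact Or.inr h
  | refl => exact Or.inl rfl
  | symm _ _ _ ih => exact ih.imp Eq.symm SharesSourceOrTarget.symm
  | trans _ _ _ _ _ ih₁ ih₂ =>
    rcases ih₁ with rfl | h₁
    · exact ih₂
    rcases ih₂ with rfl | h₂
    · exact Or.inr h₁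
    · exact Or.inr (h1.sharesSourceOrTarget_trans h₁ h₂)

theorem IsMultipath.eq_of_linked (h1 : G.MP1) (hm : G.IsMultipath m) (hx : x ∈ m)
    (hy : y ∈ m) (h : G.Linked x y) : x = y := by
  rcases h1.eq_or_sharesSourceOrTarget_of_linked h with h | ⟨-, -, h | h⟩
  · exact h
  · exact hm.2.1 x hx y hy h
  · exact hm.2.2.1 x hx y hy h

theorem IsMultipath.card_filter_source_le_one (hm : G.IsMultipath m) (hS : S ⊆ m) (v : G.V) :
    (S.filter (G.s · = v)).card ≤ 1 :=
  Finset.card_le_one.mpr fun x hx y hy => by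
    rw [Finset.mem_filter] at hx hy
    exact hm.2.1 x (hS hx.1) y (hS hy.1) (hx.2.trans hy.2.symm)

theorem IsMultipath.card_filter_target_le_one (hm : G.IsMultipath m) (hS : S ⊆ m) (v : G.V) :
    (S.filter (G.t · = v)).card ≤ 1 :=
  Finset.card_le_one.mpr fun x hx y hy => by
    rw [Finset.mem_filter] at hx hy
    exact hm.2.2.1 x (hS hx.1) y (hS hy.1) (hx.2.trans hy.2.symm)

def binaryRep (G : DiGraph) (e : G.E) : G.V ⊕ G.E → ZMod 2 :=
  if G.OnLongCohCycle e then
    Sum.elim (fun v => (if G.s e = v then 1 else 0) + (if G.t e = v then 1 else 0)) (fun _ => 0)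
  else if G.s e = G.t e then 0
  else Sum.elim (fun _ => 0) (fun f => if G.Linked e f then 1 else 0)

theorem binaryRep_of_onLongCohCycle (h : G.OnLongCohCycle e) :
    G.binaryRep e = Sum.elim
      (fun v => (if G.s e = v then 1 else 0) + (if G.t e = v then 1 else 0)) (fun _ => 0) :=
  if_pos h

theorem binaryRep_of_loop (h : G.s e = G.t e) : G.binaryRep e = 0 := by
  have hcyc : ¬G.OnLongCohCycle e := fun ⟨_, hc, hlen, he⟩ => hc.source_ne_target hlen he h
  rw [binaryRep, if_neg hcyc, if_pos h]

theorem binaryRep_of_not_onLongCohCycle (hcyc : ¬G.OnLongCohCycle e) (hloop : G.s e ≠ G.t e) :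
    G.binaryRep e = Sum.elim (fun _ => 0) (fun f => if G.Linked e f then 1 else 0) := by
  rw [binaryRep, if_neg hcyc, if_neg hloop]

theorem IsCohCycle.sum_binaryRep_eq_zero (hc : G.IsCohCycle c) (hlen : 2 ≤ c.length) :
    ∑ e ∈ c.toFinset, G.binaryRep e = 0 := by
  rw [List.sum_toFinset _ hc.2.1, ← Fin.sum_univ_fun_getElem]
  funext z
  rw [Finset.sum_apply, Finset.sum_congr rfl fun i _ =>
    congrFun (binaryRep_of_onLongCohCycle ⟨c, hc, hlen, List.getElem_mem i.2⟩) z]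
  rcases z with v | f
  · simp only [Sum.elim_inl, Finset.sum_add_distrib, ← List.get_eq_getElem, hc.target_get]
    rw [Equiv.sum_comp (finRotate _) (fun i => if G.s (c.get i) = v then (1 : ZMod 2) else 0),
      CharTwo.add_self_eq_zero]
    rfl
  · simp

theorem MP2.binaryRep_eq_of_sharesSourceOrTarget (h2 : G.MP2) (hef : e ≠ f)
    (h : G.SharesSourceOrTarget e f) : G.binaryRep e = G.binaryRep f := by
  have hcyc : ¬G.OnLongCohCycle e ∧ ¬G.OnLongCohCycle f := by
    rcases h.2.2 with h' | h'
    · exact ⟨h2.not_onLongCohCycle_of_source_eq hef h',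
        h2.not_onLongCohCycle_of_source_eq hef.symm h'.symm⟩
    · exact ⟨h2.not_onLongCohCycle_of_target_eq hef h',
        h2.not_onLongCohCycle_of_target_eq hef.symm h'.symm⟩
  rw [binaryRep_of_not_onLongCohCycle hcyc.1 h.1, binaryRep_of_not_onLongCohCycle hcyc.2 h.2.1]
  have hlink : G.Linked e f := Relation.EqvGen.rel _ _ h
  congr 1
  funext g
  exact if_congr ⟨hlink.symm.trans _ _ _, hlink.trans _ _ _⟩ rfl rfl

def IsBalanced (G : DiGraph) (S : Finset G.E) : Prop :=
  ∀ v, (∃ x ∈ S, G.s x = v) ↔ ∃ x ∈ S, G.t x = v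

theorem MP2.get_finRotate_mem_iff (h2 : G.MP2) (hc : G.IsCohCycle c) (hlen : 2 ≤ c.length)
    (hS : G.IsBalanced S) (i : Fin c.length) : c.get (finRotate _ i) ∈ S ↔ c.get i ∈ S := by
  have hv := hc.target_get i
  constructor
  · intro hmem
    obtain ⟨x, hx, hxt⟩ := (hS _).mp ⟨_, hmem, rfl⟩
    rwa [h2.eq_get_of_target_eq hc hlen (hxt.trans hv.symm)] at hx
  · intro hmem
    obtain ⟨x, hx, hxs⟩ := (hS _).mpr ⟨_, hmem, rfl⟩
    rwa [h2.eq_get_of_source_eq hc hlen (hxs.trans hv)] at hx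

theorem MP2.forall_mem_of_isBalanced (h2 : G.MP2) (hc : G.IsCohCycle c) (hlen : 2 ≤ c.length)
    (hS : G.IsBalanced S) (hec : e ∈ c) (heS : e ∈ S) : ∀ f ∈ c, f ∈ S := by
  obtain ⟨i, rfl⟩ := List.mem_iff_get.mp hec
  intro f hf
  obtain ⟨j, rfl⟩ := List.mem_iff_get.mp hf
  exact forall_of_finRotate_invariant (p := (c.get · ∈ S))
    (h2.get_finRotate_mem_iff hc hlen hS) heS j

theorem onLongCohCycle_of_sum_binaryRep_eq_zero (h1 : G.MP1) (hm : G.IsMultipath m)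
    (hS : S ⊆ m) (hsum : ∑ x ∈ S, G.binaryRep x = 0) (he : e ∈ S) : G.OnLongCohCycle e := by
  by_contra hcyc
  have hcoord := congrFun hsum (Sum.inr e)
  rw [Finset.sum_apply, Pi.zero_apply] at hcoord
  have hterm : ∀ x ∈ S, G.binaryRep x (Sum.inr e) = if x = e then 1 else 0 := by
    intro x hx
    by_cases hxcyc : G.OnLongCohCycle x
    · rw [binaryRep_of_onLongCohCycle hxcyc, if_neg (by rintro rfl; exact hcyc hxcyc)]
      rfl
    · rw [binaryRep_of_not_onLongCohCycle hxcyc (hm.1 x (hS hx))]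
      exact if_congr ⟨hm.eq_of_linked h1 (hS hx) (hS he), fun h => h ▸ Relation.EqvGen.refl _⟩
        rfl rfl
  rw [Finset.sum_congr rfl hterm, Finset.sum_ite_eq' S e, if_pos he] at hcoord
  exact one_ne_zero hcoord

theorem isBalanced_of_sum_binaryRep_eq_zero (hm : G.IsMultipath m) (hS : S ⊆ m)
    (hcyc : ∀ x ∈ S, G.OnLongCohCycle x) (hsum : ∑ x ∈ S, G.binaryRep x = 0) :
    G.IsBalanced S := by
  intro v
  have hcoord := congrFun hsum (Sum.inl v)
  rw [Finset.sum_apply, Pi.zero_apply, Finset.sum_congr rfl fun x hx =>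
    congrFun (binaryRep_of_onLongCohCycle (hcyc x hx)) _] at hcoord
  simp only [Sum.elim_inl, Finset.sum_add_distrib, Finset.sum_boole] at hcoord
  rw [← Nat.cast_add, ZMod.natCast_eq_zero_iff] at hcoord
  have hcard : (S.filter (G.s · = v)).card = (S.filter (G.t · = v)).card := by
    have := hm.card_filter_source_le_one hS v
    have := hm.card_filter_target_le_one hS v
    omega
  simp only [← Finset.filter_nonempty_iff, ← Finset.card_pos, hcard]

theorem IsMultipath.eq_empty_of_sum_binaryRep_eq_zero (hMP : G.IsMPDigraph)
    (hm : G.IsMultipath m) (hS : S ⊆ m) (hsum : ∑ x ∈ S, G.binaryRep x = 0) : S = ∅ := by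
  by_contra hne
  obtain ⟨e, he⟩ := Finset.nonempty_iff_ne_empty.mpr hne
  have hcyc : ∀ x ∈ S, G.OnLongCohCycle x := fun x hx =>
    onLongCohCycle_of_sum_binaryRep_eq_zero hMP.1 hm hS hsum hx
  obtain ⟨c, hc, hlen, hec⟩ := hcyc e he
  have hbal := isBalanced_of_sum_binaryRep_eq_zero hm hS hcyc hsum
  exact hm.2.2.2
    ⟨c, hc, fun f hf => hS (hMP.2.forall_mem_of_isBalanced hc hlen hbal hec he f hf)⟩

theorem isMultipath_of_forall_sum_binaryRep_eq_zero (hMP : G.IsMPDigraph)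
    (h : ∀ S ⊆ m, ∑ x ∈ S, G.binaryRep x = 0 → S = ∅) : G.IsMultipath m := by
  have hloop : ∀ e ∈ m, G.s e ≠ G.t e := fun e he hl => by
    simpa using h {e} (by simpa) (by simp [binaryRep_of_loop hl])
  have hpair : ∀ e ∈ m, ∀ f ∈ m, G.SharesSourceOrTarget e f → e = f := by
    intro e he f hf hsh
    by_contra hef
    simpa using h {e, f} (Finset.insert_subset he (by simpa))
      (by rw [Finset.sum_pair hef, hMP.2.binaryRep_eq_of_sharesSourceOrTarget hef hsh,
        ZModModule.add_self])
  refine ⟨hloop, fun e he f hf hs => hpair e he f hf ⟨hloop e he, hloop f hf, Or.inl hs⟩,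
    fun e he f hf ht => hpair e he f hf ⟨hloop e he, hloop f hf, Or.inr ht⟩, ?_⟩
  rintro ⟨c, hc, hcm⟩
  obtain ⟨e, he⟩ := List.exists_mem_of_ne_nil c hc.1
  by_cases hlen : 2 ≤ c.length
  · simpa [hc.1] using h c.toFinset (fun x hx => hcm x (List.mem_toFinset.mp hx))
      (hc.sum_binaryRep_eq_zero hlen)
  · have : c.length = 1 := by have := List.length_pos_iff.mpr hc.1; omega
    exact hloop e (hcm e he) (hc.source_eq_target_of_length_eq_one this he)

theorem isMultipath_iff_linearIndepOn_binaryRep (hMP : G.IsMPDigraph) :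
    G.IsMultipath m ↔ LinearIndepOn (ZMod 2) G.binaryRep ↑m := by
  rw [linearIndepOn_zmod_two_iff]
  exact ⟨fun hm _ hS hsum => hm.eq_empty_of_sum_binaryRep_eq_zero hMP hS hsum,
    isMultipath_of_forall_sum_binaryRep_eq_zero hMP⟩

theorem repOver_of_isMultipath_iff {F ι : Type} [Field F] [Fintype ι] (v : G.E → ι → F)
    (hv : ∀ m, G.IsMultipath m ↔ LinearIndepOn F v ↑m) : G.RepOver F := by
  let eqv := (Fintype.equivFin ι).symm
  refine ⟨Fintype.card ι, Matrix.of fun i e => v e (eqv i), fun m => ?_⟩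
  rw [hv m, LinearIndepOn]
  exact (LinearMap.linearIndependent_iff (LinearEquiv.funCongrLeft F F eqv).toLinearMap
    (LinearEquiv.ker _)).symm

end DiGraph

theorem multipath_matroid_binary_general (G : DiGraph)
    (hMP : G.IsMPDigraph) : DiGraph.RepOver G (ZMod 2) :=
  DiGraph.repOver_of_isMultipath_iff _ fun _ =>
    DiGraph.isMultipath_iff_linearIndepOn_binaryRep hMP

/-- The multipath matroid of an MP-digraph is binary, i.e.
representable over the field with two elements. -/
theorem multipath_matroid_binary (G : DiGraph) (hU : G.EdgeUnique)
    (hMP : G.IsMPDigraph) : DiGraph.RepOver G (ZMod 2) :=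
  multipath_matroid_binary_general G hMP
end
end

section
/- Let G be a connected MP-digraph and let G_1, …, G_k denote its dynamical modules. Then M_G = M_{G_1} ⊕ … ⊕ M_{G_k}. -/
set_option autoImplicit false

noncomputable section

attribute [local instance] Classical.propDecidable

/-!
Every edge `e` lies in some dynamical module: take a region through `e` minimal under
inclusion. If it contained a smaller region missing `e`, the connected component of `e` in
the difference would be a still smaller region through `e`, because the boundary and cycle
conditions survive differences of nested regions and passage to components.

At a boundary vertex of a region the region contains all in-edges and no out-edges, or the
reverse; so two edges with a common source or target lie in the same module, and an oriented
cycle lies in a single module. Hence each defining condition of a multipath can be checked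
inside a single module.
-/

theorem Relation.EqvGen.iff_of_forall_rel {α : Type*} {r : α → α → Prop} {p : α → Prop}
    (h : ∀ x y, r x y → (p x ↔ p y)) {a b : α} (hab : Relation.EqvGen r a b) : p a ↔ p b :=
  (Equivalence.eqvGen_iff (r := fun x y => p x ↔ p y) ⟨fun _ => Iff.rfl, Iff.symm, Iff.trans⟩).1
    (hab.mono h)

namespace DiGraph

open Finset Relation

variable {G : DiGraph}

theorem IsMultipath.mono {m m' : Finset G.E} (h : G.IsMultipath m) (hsub : m' ⊆ m) :
    G.IsMultipath m' := by
  obtain ⟨hloop, hs, ht, hcyc⟩ := h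
  exact ⟨fun e he => hloop e (hsub he), fun e he f hf => hs e (hsub he) f (hsub hf),
    fun e he f hf => ht e (hsub he) f (hsub hf),
    fun ⟨c, hc, hcm⟩ => hcyc ⟨c, hc, fun g hg => hsub (hcm g hg)⟩⟩

theorem IsCohCycle.forall_of_step {c : List G.E} (hc : G.IsCohCycle c) {p : G.V → Prop}
    (hstep : ∀ g ∈ c, p (G.s g) → p (G.t g)) {g₀ : G.E} (hg₀ : g₀ ∈ c) (h₀ : p (G.s g₀)) :
    ∀ g ∈ c, p (G.s g) := by
  obtain ⟨hne, -, -, hnext⟩ := hc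
  have hpos : 0 < c.length := List.length_pos_iff.2 hne
  let q : ℕ → Prop := fun k => p (G.s (c.get ⟨k % c.length, Nat.mod_lt _ hpos⟩))
  have hq : ∀ k, q k → q (k + 1) := by
    intro k hk
    have hget : c.get ⟨(k % c.length + 1) % c.length, Nat.mod_lt _ hpos⟩ =
        c.get ⟨(k + 1) % c.length, Nat.mod_lt _ hpos⟩ := by
      simp only [Nat.mod_add_mod]
    have := hstep _ (List.get_mem _ _) hk
    rwa [hnext, hget] at this
  obtain ⟨i₀, rfl⟩ := List.mem_iff_get.1 hg₀
  have hi₀ : q i₀ := by simpa [q, Nat.mod_eq_of_lt i₀.isLt] using h₀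
  intro g hg
  obtain ⟨i, rfl⟩ := List.mem_iff_get.1 hg
  have hiter : ∀ j, q (i₀ + j) := fun j => by
    induction j with
    | zero => exact hi₀
    | succ j ih => exact hq _ ih
  have := hiter (i + c.length - i₀)
  rw [show i₀.val + (i + c.length - i₀) = i + c.length by omega] at this
  simpa [q, Nat.mod_eq_of_lt i.isLt] using this

section Stability

variable {A B : Finset G.E} {v : G.V}

theorem stableIn_iff :
    G.StableIn A v ↔ (∀ g ∈ A, G.t g ≠ v) ∨ ∀ g ∈ A, G.s g ≠ v := by
  simp only [StableIn, indegIn, outdegIn, card_eq_zero, filter_eq_empty_iff]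

theorem unstableG_iff : G.UnstableG v ↔ (∃ g, G.t g = v) ∧ ∃ g, G.s g = v := by
  simp [UnstableG, indeg, outdeg, indegIn, outdegIn, card_pos, Finset.Nonempty]

theorem stableIn_congr (h : ∀ g, (G.s g = v ∨ G.t g = v) → (g ∈ A ↔ g ∈ B)) :
    G.StableIn A v ↔ G.StableIn B v := by
  simp only [stableIn_iff]
  constructor <;> rintro (hin | hout)
  exacts [Or.inl fun g hg hv => hin g ((h g (Or.inr hv)).2 hg) hv,
    Or.inr fun g hg hv => hout g ((h g (Or.inl hv)).2 hg) hv,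
    Or.inl fun g hg hv => hin g ((h g (Or.inr hv)).1 hg) hv,
    Or.inr fun g hg hv => hout g ((h g (Or.inl hv)).1 hg) hv]

theorem incidentTo_congr (h : ∀ g, (G.s g = v ∨ G.t g = v) → (g ∈ A ↔ g ∈ B)) :
    G.IncidentTo A v ↔ G.IncidentTo B v :=
  ⟨fun ⟨g, hg, hv⟩ => ⟨g, (h g hv).1 hg, hv⟩, fun ⟨g, hg, hv⟩ => ⟨g, (h g hv).2 hg, hv⟩⟩

theorem not_incidentTo_inter (hu : G.UnstableG v) (hA : G.StableIn A v) (hB : G.StableIn B v)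
    (hcover : ∀ g, g ∈ A ∨ g ∈ B) : ¬G.IncidentTo (A ∩ B) v := by
  rintro ⟨g, hg, hv⟩
  obtain ⟨hgA, hgB⟩ := mem_inter.1 hg
  rw [unstableG_iff] at hu
  obtain ⟨⟨gin, hgin⟩, ⟨gout, hgout⟩⟩ := hu
  rw [stableIn_iff] at hA hB
  rcases hA with hA | hA <;> rcases hB with hB | hB
  · rcases hcover gin with h | h
    exacts [hA gin h hgin, hB gin h hgin]
  · rcases hv with hv | hv
    exacts [hB g hgB hv, hA g hgA hv]
  · rcases hv with hv | hv
    exacts [hA g hgA hv, hB g hgB hv]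
  · rcases hcover gout with h | h
    exacts [hA gout h hgout, hB gout h hgout]

end Stability

/-- Condition (a) of a dynamical region, at the vertex `v`. -/
def BoundaryCond (G : DiGraph) (R : Finset G.E) (v : G.V) : Prop :=
  G.IncidentTo R v → G.IncidentTo (univ \ R) v →
    G.UnstableG v ∧ G.StableIn R v ∧ G.StableIn (univ \ R) v

/-- Conditions (a) and (b) of a dynamical region; unlike regions, such edge sets are closed
under differences of nested sets and under taking connected components. -/
def IsDynClosed (G : DiGraph) (R : Finset G.E) : Prop :=
  (∀ v, G.BoundaryCond R v) ∧
    ∀ c : List G.E, G.IsCohCycle c → (∃ g ∈ c, g ∈ R) → ∀ g ∈ c, g ∈ R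

section Boundary

variable {A B R : Finset G.E} {v : G.V} {a b : G.E}

theorem boundaryCond_congr (h : ∀ g, (G.s g = v ∨ G.t g = v) → (g ∈ A ↔ g ∈ B)) :
    G.BoundaryCond A v ↔ G.BoundaryCond B v := by
  have hc : ∀ g, (G.s g = v ∨ G.t g = v) → (g ∈ univ \ A ↔ g ∈ univ \ B) := fun g hg => by
    simp [h g hg]
  simp only [BoundaryCond, incidentTo_congr h, incidentTo_congr hc, stableIn_congr h,
    stableIn_congr hc]

theorem boundaryCond_univ_sdiff : G.BoundaryCond (univ \ R) v ↔ G.BoundaryCond R v := by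
  simp only [BoundaryCond, Finset.sdiff_sdiff_eq_self (subset_univ R)]
  tauto

theorem BoundaryCond.mem_of_source_eq (hR : G.BoundaryCond R (G.s a)) (ha : a ∈ R)
    (hab : G.s a = G.s b) : b ∈ R := by
  by_contra hb
  obtain ⟨hu, hst, hstc⟩ :=
    hR ⟨a, ha, Or.inl rfl⟩ ⟨b, mem_sdiff.2 ⟨mem_univ b, hb⟩, Or.inl hab.symm⟩
  obtain ⟨⟨g, hg⟩, -⟩ := unstableG_iff.1 hu
  rw [stableIn_iff] at hst hstc
  rcases hst with hst | hst
  · rcases hstc with hstc | hstc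
    · by_cases hgR : g ∈ R
      exacts [hst g hgR hg, hstc g (mem_sdiff.2 ⟨mem_univ g, hgR⟩) hg]
    · exact hstc b (mem_sdiff.2 ⟨mem_univ b, hb⟩) hab.symm
  · exact hst a ha rfl

theorem BoundaryCond.mem_of_target_eq (hR : G.BoundaryCond R (G.t a)) (ha : a ∈ R)
    (hab : G.t a = G.t b) : b ∈ R := by
  by_contra hb
  obtain ⟨hu, hst, hstc⟩ :=
    hR ⟨a, ha, Or.inr rfl⟩ ⟨b, mem_sdiff.2 ⟨mem_univ b, hb⟩, Or.inr hab.symm⟩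
  obtain ⟨-, ⟨g, hg⟩⟩ := unstableG_iff.1 hu
  rw [stableIn_iff] at hst hstc
  rcases hst with hst | hst
  · exact hst a ha rfl
  · rcases hstc with hstc | hstc
    · exact hstc b (mem_sdiff.2 ⟨mem_univ b, hb⟩) hab.symm
    · by_cases hgR : g ∈ R
      exacts [hst g hgR hg, hstc g (mem_sdiff.2 ⟨mem_univ g, hgR⟩) hg]

end Boundary

theorem isDynClosed_univ : G.IsDynClosed univ :=
  ⟨fun _ _ ⟨g, hg, _⟩ => absurd hg (by simp), fun _ _ _ g _ => mem_univ g⟩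

theorem IsDynClosed.sdiff {R R' : Finset G.E} (hR : G.IsDynClosed R) (hR' : G.IsDynClosed R')
    (hsub : R' ⊆ R) : G.IsDynClosed (R \ R') := by
  refine ⟨fun v => ?_, ?_⟩
  · by_cases hvR : ∀ g, (G.s g = v ∨ G.t g = v) → g ∈ R
    · refine (boundaryCond_congr fun g hg => ?_).2 (boundaryCond_univ_sdiff.2 (hR'.1 v))
      simp [hvR g hg]
    push Not at hvR
    obtain ⟨g₀, hg₀v, hg₀R⟩ := hvR
    by_cases hvR' : G.IncidentTo R' v
    · rintro ⟨e, he, hev⟩ -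
      obtain ⟨heR, heR'⟩ := mem_sdiff.1 he
      obtain ⟨hu, -, hstc'⟩ := hR'.1 v hvR' ⟨e, by simpa using heR', hev⟩
      obtain ⟨-, hst, -⟩ := hR.1 v ⟨e, heR, hev⟩ ⟨g₀, by simpa using hg₀R, hg₀v⟩
      refine absurd ⟨e, by simpa [heR] using heR', hev⟩ (not_incidentTo_inter hu hst hstc' ?_)
      intro g
      by_cases hg : g ∈ R'
      exacts [Or.inl (hsub hg), Or.inr (by simpa using hg)]
    · refine (boundaryCond_congr fun g hg => ?_).1 (hR.1 v)
      have : g ∉ R' := fun hgR' => hvR' ⟨g, hgR', hg⟩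
      simp [this]
  · rintro c hc ⟨g₀, hg₀c, hg₀⟩ g hg
    obtain ⟨hg₀R, hg₀R'⟩ := mem_sdiff.1 hg₀
    refine mem_sdiff.2 ⟨hR.2 c hc ⟨g₀, hg₀c, hg₀R⟩ g hg, fun hgR' => ?_⟩
    exact hg₀R' (hR'.2 c hc ⟨g, hg, hgR'⟩ g₀ hg₀c)

theorem adjIn_symm {R : Finset G.E} {a b : G.V} (h : G.adjIn R a b) : G.adjIn R b a :=
  let ⟨g, hg, hab⟩ := h
  ⟨g, hg, hab.symm⟩

theorem adjIn_mono {R R' : Finset G.E} (hsub : R ⊆ R') {a b : G.V} (h : G.adjIn R a b) :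
    G.adjIn R' a b :=
  let ⟨g, hg, hab⟩ := h
  ⟨g, hsub hg, hab⟩

section Component

variable {P : Finset G.E} {e : G.E}

def component (G : DiGraph) (P : Finset G.E) (e : G.E) : Finset G.E :=
  P.filter fun g => EqvGen (G.adjIn P) (G.s e) (G.s g)

theorem component_subset : G.component P e ⊆ P := filter_subset _ _

theorem mem_component_self (he : e ∈ P) : e ∈ G.component P e :=
  mem_filter.2 ⟨he, EqvGen.refl _⟩

theorem mem_component_iff_of_reach {v : G.V} (hv : EqvGen (G.adjIn P) (G.s e) v) {g : G.E}
    (hgv : G.s g = v ∨ G.t g = v) : g ∈ G.component P e ↔ g ∈ P := by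
  refine ⟨fun hg => component_subset hg, fun hg => mem_filter.2 ⟨hg, ?_⟩⟩
  rcases hgv with rfl | rfl
  · exact hv
  · exact hv.trans _ _ _ (EqvGen.rel _ _ (adjIn_symm ⟨g, hg, Or.inl ⟨rfl, rfl⟩⟩))

theorem reach_of_mem_component {g : G.E} (hg : g ∈ G.component P e) {v : G.V}
    (hgv : G.s g = v ∨ G.t g = v) : EqvGen (G.adjIn P) (G.s e) v := by
  obtain ⟨hgP, hreach⟩ := mem_filter.1 hg
  rcases hgv with rfl | rfl
  · exact hreach
  · exact hreach.trans _ _ _ (EqvGen.rel _ _ ⟨g, hgP, Or.inl ⟨rfl, rfl⟩⟩)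

theorem edgeConnected_component : G.EdgeConnected (G.component P e) := by
  let T : G.V → Prop := EqvGen (G.adjIn (G.component P e)) (G.s e)
  have hstep : ∀ x y, G.adjIn P x y → T x → T y := by
    rintro x y ⟨g, hgP, hxy⟩ hx
    have hx' : EqvGen (G.adjIn P) (G.s e) x := hx.mono fun _ _ => adjIn_mono component_subset
    have hgx : G.s g = x ∨ G.t g = x := by tauto
    exact hx.trans _ _ _ (EqvGen.rel _ _ ⟨g, (mem_component_iff_of_reach hx' hgx).2 hgP, hxy⟩)
  have hT : ∀ x, EqvGen (G.adjIn P) (G.s e) x → T x := fun x hx =>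
    (EqvGen.iff_of_forall_rel (fun x y hxy => ⟨hstep x y hxy, hstep y x (adjIn_symm hxy)⟩)
      hx).1 (EqvGen.refl _)
  intro a ha b hb
  exact (hT _ (reach_of_mem_component ha (Or.inl rfl))).symm _ _ |>.trans _ _ _
    (hT _ (reach_of_mem_component hb (Or.inl rfl)))

theorem IsDynClosed.component (hP : G.IsDynClosed P) : G.IsDynClosed (G.component P e) := by
  refine ⟨fun v => ?_, ?_⟩
  · by_cases hv : EqvGen (G.adjIn P) (G.s e) v
    · exact (boundaryCond_congr fun g hg => (mem_component_iff_of_reach hv hg).symm).1 (hP.1 v)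
    · exact fun ⟨g, hg, hgv⟩ => absurd (reach_of_mem_component hg hgv) hv
  · rintro c hc ⟨g₀, hg₀c, hg₀⟩ g hg
    have hcP := hP.2 c hc ⟨g₀, hg₀c, component_subset hg₀⟩
    refine mem_filter.2 ⟨hcP g hg, hc.forall_of_step (fun g' hg' h => ?_) hg₀c
      (mem_filter.1 hg₀).2 g hg⟩
    exact h.trans _ _ _ (EqvGen.rel _ _ ⟨g', hcP g' hg', Or.inl ⟨rfl, rfl⟩⟩)

theorem isDynRegion_component (hP : G.IsDynClosed P) (he : e ∈ P) :
    G.IsDynRegion (G.component P e) :=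
  ⟨⟨e, mem_component_self he⟩, edgeConnected_component, hP.component⟩

end Component

theorem isDynRegion_univ (hconn : G.ConnectedD) (e : G.E) : G.IsDynRegion univ :=
  ⟨⟨e, mem_univ e⟩,
    fun a _ b _ => (hconn.2 (G.s a) (G.s b)).mono fun _ _ ⟨g, hg⟩ => ⟨g, mem_univ g, hg⟩,
    isDynClosed_univ⟩

theorem exists_isDynModule_mem (hconn : G.ConnectedD) (e : G.E) :
    ∃ R, G.IsDynModule R ∧ e ∈ R := by
  obtain ⟨R, ⟨hR, heR⟩, hmin⟩ := exists_minimal_of_wellFoundedLT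
    (fun R : Finset G.E => G.IsDynRegion R ∧ e ∈ R) ⟨univ, isDynRegion_univ hconn e, mem_univ e⟩
  refine ⟨R, ⟨hR, fun R' hR'R hR' => ?_⟩, heR⟩
  by_cases heR' : e ∈ R'
  · exact le_antisymm hR'R (hmin ⟨hR', heR'⟩ hR'R)
  have hsdiff : e ∈ R \ R' := mem_sdiff.2 ⟨heR, heR'⟩
  have hRK : R ⊆ G.component (R \ R') e :=
    hmin ⟨isDynRegion_component (IsDynClosed.sdiff hR.2.2 hR'.2.2 hR'R) hsdiff,
      mem_component_self hsdiff⟩ (component_subset.trans sdiff_subset)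
  obtain ⟨x, hx⟩ := hR'.1
  exact absurd hx (mem_sdiff.1 (component_subset (hRK (hR'R hx)))).2

theorem isMultipath_of_forall_inter {m : Finset G.E} {𝓡 : Finset G.E → Prop}
    (hcover : ∀ e, ∃ R, 𝓡 R ∧ e ∈ R) (hclosed : ∀ R, 𝓡 R → G.IsDynClosed R)
    (h : ∀ R, 𝓡 R → G.IsMultipath (m ∩ R)) : G.IsMultipath m := by
  refine ⟨fun a ha => ?_, fun a ha b hb hab => ?_, fun a ha b hb hab => ?_, ?_⟩
  · obtain ⟨R, hR, haR⟩ := hcover a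
    exact (h R hR).1 a (mem_inter.2 ⟨ha, haR⟩)
  · obtain ⟨R, hR, haR⟩ := hcover a
    have hbR := ((hclosed R hR).1 _).mem_of_source_eq haR hab
    exact (h R hR).2.1 a (mem_inter.2 ⟨ha, haR⟩) b (mem_inter.2 ⟨hb, hbR⟩) hab
  · obtain ⟨R, hR, haR⟩ := hcover a
    have hbR := ((hclosed R hR).1 _).mem_of_target_eq haR hab
    exact (h R hR).2.2.1 a (mem_inter.2 ⟨ha, haR⟩) b (mem_inter.2 ⟨hb, hbR⟩) hab
  · rintro ⟨c, hc, hcm⟩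
    obtain ⟨g₀, hg₀⟩ := List.exists_mem_of_ne_nil c hc.1
    obtain ⟨R, hR, hg₀R⟩ := hcover g₀
    have hcR := (hclosed R hR).2 c hc ⟨g₀, hg₀, hg₀R⟩
    exact (h R hR).2.2.2 ⟨c, hc, fun g hg => mem_inter.2 ⟨hcm g hg, hcR g hg⟩⟩

end DiGraph

open DiGraph in
theorem multipath_matroid_direct_sum_modules_general (G : DiGraph)
    (hconn : G.ConnectedD) (m : Finset G.E) :
    G.IsMultipath m ↔
      ∀ R : Finset G.E, IsDynModule G R → G.IsMultipath (m ∩ R) :=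
  ⟨fun hm _ _ => hm.mono Finset.inter_subset_left,
    isMultipath_of_forall_inter (exists_isDynModule_mem hconn) fun _ hR => hR.1.2.2⟩

open DiGraph in
/-- For a connected MP-digraph `G` with dynamical modules
`G_1, …, G_k`, the multipath matroid decomposes as
`M_G = M_{G_1} ⊕ ⋯ ⊕ M_{G_k}`: since the edge sets of the dynamical modules
partition `E(G)`, a set of edges is independent in `M_G` iff its intersection
with each dynamical module is independent in the multipath matroid of that
module. -/
theorem multipath_matroid_direct_sum_modules (G : DiGraph) (hU : G.EdgeUnique)
    (hMP : G.IsMPDigraph) (hconn : G.ConnectedD) (m : Finset G.E) :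
    G.IsMultipath m ↔
      ∀ R : Finset G.E, IsDynModule G R → G.IsMultipath (m ∩ R) :=
  multipath_matroid_direct_sum_modules_general G hconn m

end
end
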